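/- The operator norm of the difference of the two Hamiltonians satisfies ‖H_0 − H_f‖ = ‖|m⟩⟨m| − |s⟩⟨s|‖ = √(1 − 1/N); in particular ‖H_0 − H_f‖ ≤ 1. -/

import Mathlib

/-- The rank-one projector `|ψ⟩⟨ψ|`, mapping `v` to `⟪ψ, v⟫ • ψ`. -/
noncomputable def proj {H : Type*} [NormedAddCommGroup H] [InnerProductSpace ℂ H]
    (ψ : H) : H →L[ℂ] H := (innerSL ℂ ψ).smulRight ψ

/-- The uniform superposition `|s⟩ = (1/√N) ∑_x |x⟩`. -/
noncomputable def uniformState (N : ℕ) : EuclideanSpace ℂ (Fin N) :=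
  ((1 / Real.sqrt N : ℝ) : ℂ) • ∑ x : Fin N, EuclideanSpace.single x (1 : ℂ)

/-!
Write `P = |φ⟩⟨φ|` and `Q = |ψ⟩⟨ψ|` for unit vectors and `c = ⟪φ, ψ⟫`. Then `PQP = |c|² P` and
`QPQ = |c|² Q`, so `(P - Q)³ = (1 - |c|²)(P - Q)`. As `P - Q` is self-adjoint, the C⋆-identity gives
`‖P - Q‖⁴ = ‖(P - Q)⁴‖ = (1 - |c|²) ‖P - Q‖²`, hence `‖P - Q‖ = √(1 - |c|²)` (if `P = Q` then
`|c| = 1`). Here `H₀ - H_f = |m⟩⟨m| - |s⟩⟨s|` and `|⟨m|s⟩|² = 1/N`.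
-/

open InnerProductSpace

theorem sub_pow_three_of_isIdempotentElem {R A : Type*} [CommRing R] [Ring A] [Algebra R A]
    {P Q : A} (hP : IsIdempotentElem P) (hQ : IsIdempotentElem Q) {t : R}
    (hPQP : P * Q * P = t • P) (hQPQ : Q * P * Q = t • Q) :
    (P - Q) ^ 3 = (1 - t) • (P - Q) := by
  have hsq : (P - Q) ^ 2 = P + Q - P * Q - Q * P := by
    rw [sq, sub_mul, mul_sub, mul_sub, hP.eq, hQ.eq]; abel
  calc (P - Q) ^ 3 = (P - Q) * (P - Q) ^ 2 := pow_succ' _ _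
    _ = P - Q - P * Q * P + Q * P * Q := by
      rw [hsq]
      simp only [mul_add, mul_sub, sub_mul, ← mul_assoc, hP.eq, hQ.eq]
      abel
    _ = (1 - t) • (P - Q) := by rw [hPQP, hQPQ, sub_smul, one_smul, smul_sub]; abel

theorem IsSelfAdjoint.norm_sq_eq_of_pow_three_eq_smul {𝕜 E : Type*} [NormedField 𝕜]
    [NormedRing E] [StarRing E] [CStarRing E] [NormedAlgebra 𝕜 E] {a : E}
    (ha : IsSelfAdjoint a) (ha0 : a ≠ 0) {r : 𝕜} (h : a ^ 3 = r • a) : ‖a‖ ^ 2 = ‖r‖ := by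
  have h4 : a ^ 2 ^ 2 = r • a ^ 2 := by
    rw [show 2 ^ 2 = 1 + 3 by norm_num, pow_add, h, pow_one, mul_smul_comm, ← sq]
  have key : ‖a‖ ^ 2 * ‖a‖ ^ 2 = ‖r‖ * ‖a‖ ^ 2 := by
    rw [← pow_add, show 2 + 2 = 2 ^ 2 from rfl, ← ha.norm_pow_two_pow 2, h4, norm_smul,
      ← pow_one (2 : ℕ), ha.norm_pow_two_pow]
  exact mul_right_cancel₀ (by positivity) key

section proj

variable {H : Type*} [NormedAddCommGroup H] [InnerProductSpace ℂ H]

theorem proj_eq_rankOne (ψ : H) : proj ψ = rankOne ℂ ψ ψ := rfl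

theorem isSelfAdjoint_proj [CompleteSpace H] (ψ : H) : IsSelfAdjoint (proj ψ) := by
  rw [proj_eq_rankOne, ContinuousLinearMap.isSelfAdjoint_iff', adjoint_rankOne]

theorem isIdempotentElem_proj {ψ : H} (hψ : ‖ψ‖ = 1) : IsIdempotentElem (proj ψ) :=
  isIdempotentElem_rankOne_self hψ

theorem inner_mul_inner_symm_eq_norm_sq (φ ψ : H) :
    inner ℂ φ ψ * inner ℂ ψ φ = (‖inner ℂ φ ψ‖ : ℂ) ^ 2 := by
  rw [← inner_conj_symm ψ φ, Complex.mul_conj']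

theorem proj_mul_proj_mul_proj (φ ψ : H) :
    proj φ * proj ψ * proj φ = (‖inner ℂ φ ψ‖ : ℂ) ^ 2 • proj φ := by
  simp only [proj_eq_rankOne, ContinuousLinearMap.mul_def, rankOne_comp_rankOne,
    ContinuousLinearMap.smul_comp, smul_smul, inner_mul_inner_symm_eq_norm_sq]

theorem inner_proj_sub_proj_apply_self {φ : H} (hφ : ‖φ‖ = 1) (ψ : H) :
    inner ℂ φ ((proj φ - proj ψ) φ) = 1 - (‖inner ℂ φ ψ‖ : ℂ) ^ 2 := by
  simp [proj_eq_rankOne, inner_mul_inner_symm_eq_norm_sq, norm_inner_symm, hφ]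

theorem norm_proj_sub_proj [CompleteSpace H] {φ ψ : H} (hφ : ‖φ‖ = 1) (hψ : ‖ψ‖ = 1) :
    ‖proj φ - proj ψ‖ = √(1 - ‖inner ℂ φ ψ‖ ^ 2) := by
  have hc : ‖inner ℂ φ ψ‖ ≤ 1 := by
    simpa [hφ, hψ] using norm_inner_le_norm (𝕜 := ℂ) φ ψ
  have hr : 0 ≤ 1 - ‖inner ℂ φ ψ‖ ^ 2 := sub_nonneg.mpr (pow_le_one₀ (norm_nonneg _) hc)
  rcases eq_or_ne (proj φ - proj ψ) 0 with h0 | h0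
  · have h1 : 1 - ‖inner ℂ φ ψ‖ ^ 2 = 0 := by
      have := inner_proj_sub_proj_apply_self hφ ψ
      rw [h0, zero_apply, inner_zero_right] at this
      exact_mod_cast this.symm
    rw [h0, norm_zero, h1, Real.sqrt_zero]
  · have hcube : (proj φ - proj ψ) ^ 3 = ((1 - ‖inner ℂ φ ψ‖ ^ 2 : ℝ) : ℂ) • (proj φ - proj ψ) := by
      push_cast
      refine sub_pow_three_of_isIdempotentElem (isIdempotentElem_proj hφ)
        (isIdempotentElem_proj hψ) (proj_mul_proj_mul_proj φ ψ) ?_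
      rw [proj_mul_proj_mul_proj, norm_inner_symm]
    have := ((isSelfAdjoint_proj φ).sub (isSelfAdjoint_proj ψ)).norm_sq_eq_of_pow_three_eq_smul
      h0 hcube
    rw [Complex.norm_real, Real.norm_of_nonneg hr] at this
    rw [← this, Real.sqrt_sq (norm_nonneg _)]

end proj

theorem uniformState_apply (N : ℕ) (x : Fin N) : uniformState N x = ((1 / √N : ℝ) : ℂ) := by
  simp [uniformState]

theorem norm_uniformState {N : ℕ} (hN : N ≠ 0) : ‖uniformState N‖ = 1 := by
  rw [EuclideanSpace.norm_eq]
  simp [uniformState_apply, hN]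

theorem inner_single_uniformState {N : ℕ} (m : Fin N) :
    inner ℂ (EuclideanSpace.single m (1 : ℂ)) (uniformState N) = ((1 / √N : ℝ) : ℂ) := by
  simp [EuclideanSpace.inner_single_left, uniformState_apply]

theorem norm_sub_searchHamiltonians_general (N : ℕ) (m : Fin N)
    (H0 Hf : EuclideanSpace ℂ (Fin N) →L[ℂ] EuclideanSpace ℂ (Fin N))
    (hH0 : H0 = 1 - proj (uniformState N))
    (hHf : Hf = 1 - proj (EuclideanSpace.single m 1)) :
    ‖H0 - Hf‖ = ‖proj (EuclideanSpace.single m (1:ℂ)) - proj (uniformState N)‖ ∧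
    ‖H0 - Hf‖ = Real.sqrt (1 - 1 / N) ∧
    ‖H0 - Hf‖ ≤ 1 := by
  have hdiff : H0 - Hf = proj (EuclideanSpace.single m 1) - proj (uniformState N) := by
    rw [hH0, hHf, sub_sub_sub_cancel_left]
  have hnorm : ‖proj (EuclideanSpace.single m (1:ℂ)) - proj (uniformState N)‖ = √(1 - 1 / N) := by
    rw [norm_proj_sub_proj (by simp) (norm_uniformState m.pos.ne'), inner_single_uniformState,
      Complex.norm_real, Real.norm_of_nonneg (by positivity), div_pow, one_pow,
      Real.sq_sqrt (Nat.cast_nonneg _)]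
  refine ⟨by rw [hdiff], by rw [hdiff, hnorm], ?_⟩
  rw [hdiff, hnorm]
  exact Real.sqrt_le_one.mpr (by linarith [show (0 : ℝ) ≤ 1 / N by positivity])

/-- `‖H⁰ − H_f‖ = ‖|m⟩⟨m| − |s⟩⟨s|‖ = √(1 − 1/N)`, where `H⁰ = I − |s⟩⟨s|`
and `H_f = I − |m⟩⟨m|`; in particular `‖H⁰ − H_f‖ ≤ 1`. -/
theorem norm_sub_searchHamiltonians (N : ℕ) (hN : 2 ≤ N) (m : Fin N)
    (H0 Hf : EuclideanSpace ℂ (Fin N) →L[ℂ] EuclideanSpace ℂ (Fin N))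
    (hH0 : H0 = 1 - proj (uniformState N))
    (hHf : Hf = 1 - proj (EuclideanSpace.single m 1)) :
    ‖H0 - Hf‖ = ‖proj (EuclideanSpace.single m (1:ℂ)) - proj (uniformState N)‖ ∧
    ‖H0 - Hf‖ = Real.sqrt (1 - 1 / N) ∧
    ‖H0 - Hf‖ ≤ 1 :=
  norm_sub_searchHamiltonians_general N m H0 Hf hH0 hHf
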